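/- arXiv:1811.10400 — 7 statements merged into one kernel-verified Lean document; each statement's English description precedes it below -/
import Mathlib

section
/- Safety-formula satisfaction respects bisimulation: if R is a bisimulation between F-coalgebras C = (X, θ_X, δ_X) and D = (Y, θ_Y, δ_Y) and (x, y) ∈ R, then for every closed and guarded safety formula ψ, (C, x) ⊨ ψ if and only if (D, y) ⊨ ψ. -/
/-- Safety formulae over inputs `I` and observations `O`, with de Bruijn-indexed
fixed-point variables: `ψ ::= v | [P]ψ | ⟨Q⟩ | ψ ∧ ψ | νv.ψ(v)`. -/
inductive SF (I O : Type) : Type where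
  | var  : ℕ → SF I O
  | box  : Set I → SF I O → SF I O
  | obs  : Set O → SF I O
  | conj : SF I O → SF I O → SF I O
  | nu   : SF I O → SF I O

namespace SF

variable {I O : Type}

/-- `tt`, the trivially true safety formula `⟨O⟩`. -/
def tt : SF I O := obs Set.univ

/-- Simultaneous substitution of the (closed) formulae `env n` for the free
variables `n`. -/
def substAll (env : ℕ → SF I O) : SF I O → SF I O
  | var n => env n
  | box P ψ => box P (substAll env ψ)
  | obs Q => obs Q
  | conj a b => conj (substAll env a) (substAll env b)
  | nu ψ => nu (substAll (fun n => match n with | 0 => var 0 | n + 1 => env n) ψ)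

/-- Free variables of a safety formula. -/
def FV : SF I O → Set ℕ
  | var n => {n}
  | box _ ψ => FV ψ
  | obs _ => ∅
  | conj a b => FV a ∪ FV b
  | nu ψ => {n | n + 1 ∈ FV ψ}

/-- Free variables occurring unguarded, i.e. not under any box `[P]`. -/
def UFV : SF I O → Set ℕ
  | var n => {n}
  | box _ _ => ∅
  | obs _ => ∅
  | conj a b => UFV a ∪ UFV b
  | nu ψ => {n | n + 1 ∈ UFV ψ}

/-- A formula is closed when it has no free variables. -/
def Closed (ψ : SF I O) : Prop := FV ψ = ∅

/-- A formula is guarded when every bound fixed-point variable occurs only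
guarded (under a box). -/
def Guarded : SF I O → Prop
  | var _ => True
  | box _ ψ => Guarded ψ
  | obs _ => True
  | conj a b => Guarded a ∧ Guarded b
  | nu ψ => Guarded ψ ∧ 0 ∉ UFV ψ

/-- Observation map `θ_ζ` of the formula coalgebra `ζ`:
`θ_ζ([P]ψ) = O`, `θ_ζ(⟨Q⟩) = Q`, `θ_ζ(ψ₁ ∧ ψ₂) = θ_ζ(ψ₁) ∩ θ_ζ(ψ₂)`, and on
`νv.ψ(v)` it is that of the unfolding `ψ[νv.ψ(v)/v]` (for guarded formulae this
is `θ_ζ(ψ)` since the unfolding only changes subformulae under boxes). -/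
def thetaZ : SF I O → Set O
  | var _ => Set.univ
  | box _ _ => Set.univ
  | obs Q => Q
  | conj a b => thetaZ a ∩ thetaZ b
  | nu ψ => thetaZ ψ

open Classical in
/-- Transition map `δ_ζ` of the formula coalgebra `ζ`, computed with an
environment recording the fixed points that have been unfolded:
`δ_ζ([P]ψ)(i) = ψ` if `i ∈ P` and `tt` otherwise; `δ_ζ(⟨Q⟩)(i) = tt`;
`δ_ζ(ψ₁ ∧ ψ₂)(i) = δ_ζ(ψ₁)(i) ∧ δ_ζ(ψ₂)(i)`; and on `νv.ψ(v)` it is `δ_ζ` of the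
unfolding `ψ[νv.ψ(v)/v]`. -/
noncomputable def deltaZAux (env : ℕ → SF I O) : SF I O → I → SF I O
  | var _, _ => tt
  | box P ψ, i => if i ∈ P then substAll env ψ else tt
  | obs _, _ => tt
  | conj a b, i => conj (deltaZAux env a i) (deltaZAux env b i)
  | nu ψ, i =>
      deltaZAux (fun n => match n with
        | 0 => substAll env (nu ψ)
        | n + 1 => env n) ψ i

/-- Transition map `δ_ζ` of `ζ` on (closed) safety formulae. -/
noncomputable def deltaZ (ψ : SF I O) (i : I) : SF I O :=
  deltaZAux (fun _ => tt) ψ i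

end SF

/-- A simulation between the F-coalgebras `(X, θX, δX)` and `(Y, θY, δY)` over
inputs `I` and observations `O`. -/
def IsSim {I O X Y : Type} (θX : X → Set O) (δX : X → I → X)
    (θY : Y → Set O) (δY : Y → I → Y) (R : X → Y → Prop) : Prop :=
  ∀ x y, R x y → θX x ⊆ θY y ∧ ∀ i, R (δX x i) (δY y i)

/-- Safety-formula satisfaction: `(C, x) ⊨ ψ` iff `(x, ψ)` belongs to some
simulation from `C` to the formula coalgebra `ζ = (SF I O, θ_ζ, δ_ζ)`. -/
def Sat {I O X : Type} (θ : X → Set O) (δ : X → I → X) (x : X) (ψ : SF I O) : Prop :=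
  ∃ R : X → SF I O → Prop, IsSim θ δ SF.thetaZ SF.deltaZ R ∧ R x ψ

/-- A bisimulation between the coalgebras `(X, θX, δX)` and `(Y, θY, δY)`. -/
def IsBisim {I O X Y : Type} (θX : X → Set O) (δX : X → I → X)
    (θY : Y → Set O) (δY : Y → I → Y) (R : X → Y → Prop) : Prop :=
  ∀ x y, R x y → θX x = θY y ∧ ∀ i, R (δX x i) (δY y i)


theorem sat_mono {I O X Y : Type}
    (θX : X → Set O) (δX : X → I → X)
    (θY : Y → Set O) (δY : Y → I → Y)
    (R : X → Y → Prop) (hR : IsBisim θX δX θY δY R)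
    (x : X) (y : Y) (hxy : R x y) (ψ : SF I O)
    (h : Sat θX δX x ψ) : Sat θY δY y ψ := by
  obtain ⟨S, hS, hSx⟩ := h
  refine ⟨fun y ψ => ∃ x, R x y ∧ S x ψ, ?_, x, hxy, hSx⟩
  rintro y ψ ⟨x, hxy, hSx⟩
  obtain ⟨hθ, hδ⟩ := hS x ψ hSx
  obtain ⟨hθ', hδ'⟩ := hR x y hxy
  exact ⟨hθ' ▸ hθ, fun i => ⟨δX x i, hδ' i, hδ i⟩⟩

/-- Safety-formula satisfaction respects bisimulation: bisimilar states satisfy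
the same closed and guarded safety formulae. -/
theorem sat_respects_bisim {I O X Y : Type}
    (θX : X → Set O) (δX : X → I → X)
    (θY : Y → Set O) (δY : Y → I → Y)
    (R : X → Y → Prop) (hR : IsBisim θX δX θY δY R)
    (x : X) (y : Y) (hxy : R x y)
    (ψ : SF I O) (hclosed : ψ.Closed) (hguarded : ψ.Guarded) :
    Sat θX δX x ψ ↔ Sat θY δY y ψ := by
  constructor
  · exact sat_mono θX δX θY δY R hR x y hxy ψ
  · exact sat_mono θY δY θX δX (fun y x => R x y)
      (fun y x h => ⟨(hR x y h).1.symm, fun i => (hR x y h).2 i⟩) y x hxy ψ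
end

section
/- (Proposition 1, safety fragment.) For every F-coalgebra C = (X, θ, δ), every state x ∈ X, and every closed and guarded safety formula ψ: (C, x) ⊨ ψ if and only if (Ω, ⟦x⟧) ⊨ ψ, where Ω is the final F-coalgebra and ⟦x⟧ is the observable behaviour of x. -/
/-- Observable behaviour of a state of an F-coalgebra `(X, θ, δ)`. -/
def beh {I O X : Type} (θ : X → Set O) (δ : X → I → X) : X → List I → Set O
  | x, [] => θ x
  | x, i :: w => beh θ δ (δ x i) w

/-- Proposition 1 (safety fragment): a state `x` of an F-coalgebra `C` satisfies a
closed and guarded safety formula `ψ` iff its observable behaviour `⟦x⟧` satisfies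
`ψ` in the final F-coalgebra `Ω = (List I → Set O, σ ↦ σ [], σ ↦ i ↦ w ↦ σ (i :: w))`. -/
theorem sat_iff_behaviour_sat {I O X : Type}
    (θ : X → Set O) (δ : X → I → X) (x : X)
    (ψ : SF I O) (hclosed : ψ.Closed) (hguarded : ψ.Guarded) :
    Sat θ δ x ψ ↔
      Sat (fun σ : List I → Set O => σ [])
        (fun σ i => fun w => σ (i :: w)) (beh θ δ x) ψ := by
  constructor
  · rintro ⟨R, hR, hx⟩
    refine ⟨fun σ φ => ∃ y, R y φ ∧ σ = beh θ δ y, ?_, ⟨x, hx, rfl⟩⟩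
    rintro σ φ ⟨y, hy, rfl⟩
    obtain ⟨h1, h2⟩ := hR y φ hy
    exact ⟨h1, fun i => ⟨δ y i, h2 i, rfl⟩⟩
  · rintro ⟨R, hR, hx⟩
    refine ⟨fun y φ => R (beh θ δ y) φ, ?_, hx⟩
    intro y φ h
    obtain ⟨h1, h2⟩ := hR _ _ h
    exact ⟨h1, fun i => h2 i⟩
end

section
/- Fixed-point characterisation of safety satisfaction: for every F-coalgebra C = (X, θ, δ), state x ∈ X, and closed guarded safety formula ψ, one has (C, x) ⊨ ψ if and only if θ(x) ⊆ θ_ζ(ψ) and (C, δ(x)(i)) ⊨ δ_ζ(ψ)(i) for all i ∈ I. -/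
/-- Fixed-point characterisation of safety satisfaction: `(C, x) ⊨ ψ` iff
`θ(x) ⊆ θ_ζ(ψ)` and `(C, δ(x)(i)) ⊨ δ_ζ(ψ)(i)` for all inputs `i`. -/
theorem sat_fixed_point {I O X : Type}
    (θ : X → Set O) (δ : X → I → X) (x : X)
    (ψ : SF I O) (hclosed : ψ.Closed) (hguarded : ψ.Guarded) :
    Sat θ δ x ψ ↔
      (θ x ⊆ SF.thetaZ ψ ∧ ∀ i : I, Sat θ δ (δ x i) (SF.deltaZ ψ i)) := by
  have satSim : IsSim θ δ SF.thetaZ SF.deltaZ (Sat θ δ) := by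
    intro x' ψ' ⟨R, hR, hx⟩
    obtain ⟨h1, h2⟩ := hR x' ψ' hx
    exact ⟨h1, fun i => ⟨R, hR, h2 i⟩⟩
  constructor
  · rintro h
    obtain ⟨h1, h2⟩ := satSim x ψ h
    exact ⟨h1, h2⟩
  · rintro ⟨h1, h2⟩
    refine ⟨fun x' ψ' => Sat θ δ x' ψ' ∨ (x' = x ∧ ψ' = ψ), ?_, Or.inr ⟨rfl, rfl⟩⟩
    rintro x' ψ' (h | ⟨rfl, rfl⟩)
    · obtain ⟨ha, hb⟩ := satSim x' ψ' h
      exact ⟨ha, fun i => Or.inl (hb i)⟩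
    · exact ⟨h1, fun i => Or.inl (h2 i)⟩
end

section
/- (Formulae implication.) If ψ₁ and ψ₂ are closed guarded safety formulae with ψ₁ ≲ ψ₂ (similarity computed in the formula coalgebra ζ), then for every F-coalgebra C and state x, (C, x) ⊨ ψ₁ implies (C, x) ⊨ ψ₂. -/
/-- Formulae implication: if `ψ₁ ≲ ψ₂` (similarity computed in the formula
coalgebra `ζ`), then every state satisfying `ψ₁` also satisfies `ψ₂`. -/
theorem formulae_implication {I O X : Type}
    (θ : X → Set O) (δ : X → I → X) (x : X)
    (ψ₁ ψ₂ : SF I O)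
    (hc₁ : ψ₁.Closed) (hg₁ : ψ₁.Guarded)
    (hc₂ : ψ₂.Closed) (hg₂ : ψ₂.Guarded)
    (hsim : ∃ R : SF I O → SF I O → Prop,
      IsSim SF.thetaZ SF.deltaZ SF.thetaZ SF.deltaZ R ∧ R ψ₁ ψ₂)
    (h : Sat θ δ x ψ₁) :
    Sat θ δ x ψ₂ := by
  obtain ⟨S, hS, hS12⟩ := hsim
  obtain ⟨R, hR, hRx⟩ := h
  refine ⟨fun y φ => ∃ φ', R y φ' ∧ S φ' φ, ?_, ψ₁, hRx, hS12⟩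
  rintro y φ ⟨φ', hRyφ', hSφ'φ⟩
  obtain ⟨hθ1, hδ1⟩ := hR y φ' hRyφ'
  obtain ⟨hθ2, hδ2⟩ := hS φ' φ hSφ'φ
  exact ⟨hθ1.trans hθ2, fun i => ⟨_, hδ1 i, hδ2 i⟩⟩
end

section
/- (Proposition 2, Satisfaction Through Enhancement.) Let C = (X, θ, δ) be an F-coalgebra, x ∈ X a state, and ψ a closed guarded safety formula. Fix a set B of algebraic operators, a simulation ≤ on C, and a simulation ⇝ on the formula coalgebra ζ. If (C, x) ⊨ ψ, then (C, x') ⊨ ψ' for every pair (x', ψ') in the precongruence closure ctu({(x, ψ)}). -/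
/-- The precongruence closure `ctu(R)` of a relation `R ⊆ X × L`, relative to a
set `B` of algebraic operators, a simulation `le` on `C` and a simulation `imp`
on the formula coalgebra `ζ`. -/
inductive Ctu {I O X : Type} (B : Set (X × SF I O → X × SF I O))
    (le : X → X → Prop) (imp : SF I O → SF I O → Prop)
    (R : X → SF I O → Prop) : X → SF I O → Prop
  | id {x ψ} : R x ψ → Ctu B le imp R x ψ
  | op {x ψ x' ψ'} (β : X × SF I O → X × SF I O) :
      R x ψ → β ∈ B → β (x, ψ) = (x', ψ') → Ctu B le imp R x' ψ'
  | tu_le {x y ψ} : le x y → Ctu B le imp R y ψ → Ctu B le imp R x ψ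
  | tu_imp {x ψ ψ'} : Ctu B le imp R x ψ → imp ψ ψ' → Ctu B le imp R x ψ'

/-- Proposition 2 (Satisfaction Through Enhancement): if `(C, x) ⊨ ψ`, then
`(C, x') ⊨ ψ'` for every pair `(x', ψ')` in the precongruence closure
`ctu({(x, ψ)})`, where every `β ∈ B` is an algebraic operator (monotone w.r.t.
satisfaction), `le` is a simulation on `C` and `imp` is a simulation on `ζ`. -/
theorem satisfaction_through_enhancement {I O X : Type}
    (θ : X → Set O) (δ : X → I → X)
    (B : Set (X × SF I O → X × SF I O))
    (hB : ∀ β ∈ B, ∀ (y : X) (χ : SF I O),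
      Sat θ δ y χ → Sat θ δ (β (y, χ)).1 (β (y, χ)).2)
    (le : X → X → Prop) (hle : IsSim θ δ θ δ le)
    (imp : SF I O → SF I O → Prop)
    (himp : IsSim SF.thetaZ SF.deltaZ SF.thetaZ SF.deltaZ imp)
    (x : X) (ψ : SF I O) (hclosed : ψ.Closed) (hguarded : ψ.Guarded)
    (hsat : Sat θ δ x ψ) :
    ∀ x' ψ', Ctu B le imp (fun y χ => y = x ∧ χ = ψ) x' ψ' → Sat θ δ x' ψ' := by
  intro x' ψ' h
  induction h with
  | id hR => obtain ⟨rfl, rfl⟩ := hR; exact hsat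
  | op β hR hβ heq =>
      obtain ⟨rfl, rfl⟩ := hR
      have := hB β hβ _ _ hsat
      rw [heq] at this
      exact this
  | tu_le hxy _ ih =>
      obtain ⟨R, hRsim, hR⟩ := ih
      refine ⟨fun a χ => ∃ b, le a b ∧ R b χ, ?_, _, hxy, hR⟩
      rintro a χ ⟨b, hab, hb⟩
      obtain ⟨h1, h2⟩ := hle a b hab
      obtain ⟨h3, h4⟩ := hRsim b χ hb
      exact ⟨h1.trans h3, fun i => ⟨_, h2 i, h4 i⟩⟩
  | tu_imp _ himpl ih =>
      obtain ⟨R, hRsim, hR⟩ := ih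
      refine ⟨fun a χ => ∃ φ, R a φ ∧ imp φ χ, ?_, _, hR, himpl⟩
      rintro a χ ⟨φ, hφ, hi⟩
      obtain ⟨h1, h2⟩ := hRsim a φ hφ
      obtain ⟨h3, h4⟩ := himp φ χ hi
      exact ⟨h1.trans h3, fun i => ⟨_, h2 i, h4 i⟩⟩
end

section
/- (Corollary 1, Counterexample Through Enhancement.) Let C = (X, θ, δ) be an F-coalgebra, x ∈ X, and ψ a closed guarded safety formula; fix a set B of algebraic operators, a simulation ≤ on C, and a simulation ⇝ on ζ. If there exists a pair (x', ψ') ∈ ctu({(x, ψ)}) such that (C, x') ⊭ ψ', then (C, x) ⊭ ψ. -/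
/-- Corollary 1 (Counterexample Through Enhancement): if some pair
`(x', ψ') ∈ ctu({(x, ψ)})` fails to satisfy, i.e. `(C, x') ⊭ ψ'`, then
`(C, x) ⊭ ψ`. -/
theorem counterexample_through_enhancement {I O X : Type}
    (θ : X → Set O) (δ : X → I → X)
    (B : Set (X × SF I O → X × SF I O))
    (hB : ∀ β ∈ B, ∀ (y : X) (χ : SF I O),
      Sat θ δ y χ → Sat θ δ (β (y, χ)).1 (β (y, χ)).2)
    (le : X → X → Prop) (hle : IsSim θ δ θ δ le)
    (imp : SF I O → SF I O → Prop)
    (himp : IsSim SF.thetaZ SF.deltaZ SF.thetaZ SF.deltaZ imp)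
    (x : X) (ψ : SF I O) (hclosed : ψ.Closed) (hguarded : ψ.Guarded)
    (hex : ∃ x' ψ', Ctu B le imp (fun y χ => y = x ∧ χ = ψ) x' ψ' ∧
      ¬ Sat θ δ x' ψ') :
    ¬ Sat θ δ x ψ := by
  obtain ⟨x', ψ', hctu, hnsat⟩ := hex
  intro hsat
  apply hnsat
  clear hnsat
  induction hctu with
  | id h => exact h.1 ▸ h.2 ▸ hsat
  | op β h hβ heq =>
      have := hB β hβ _ _ (h.1 ▸ h.2 ▸ hsat)
      rwa [heq] at this
  | tu_le hxy _ ih =>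
      obtain ⟨R, hR, hRy⟩ := ih
      exact ⟨fun a χ => ∃ b, le a b ∧ R b χ,
        fun a χ ⟨b, hab, hb⟩ =>
          ⟨(hle a b hab).1.trans (hR b χ hb).1,
           fun i => ⟨δ b i, (hle a b hab).2 i, (hR b χ hb).2 i⟩⟩,
        _, hxy, hRy⟩
  | tu_imp _ himpψ ih =>
      obtain ⟨R, hR, hRx⟩ := ih
      exact ⟨fun a χ => ∃ χ₀, R a χ₀ ∧ imp χ₀ χ,
        fun a χ ⟨χ₀, h₀, hi⟩ =>
          ⟨(hR a χ₀ h₀).1.trans (himp χ₀ χ hi).1,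
           fun i => ⟨_, (hR a χ₀ h₀).2 i, (himp χ₀ χ hi).2 i⟩⟩,
        _, hRx, himpψ⟩
end

section
/- For every F-coalgebra C = (X, θ, δ) and every input i ∈ I, the transition operator →ᵢ defined by →ᵢ(x, ψ) = (δ(x)(i), δ_ζ(ψ)(i) ∧ ⟨θ(δ(x)(i))⟩) is an algebraic operator, i.e. it is monotone with respect to ⊨: if (C, x) ⊨ ψ then (C, δ(x)(i)) ⊨ δ_ζ(ψ)(i) ∧ ⟨θ(δ(x)(i))⟩. -/
section Aux
variable {I O X : Type}

lemma deltaZ_tt (i : I) : SF.deltaZ (SF.tt : SF I O) i = SF.tt := by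
  simp [SF.deltaZ, SF.deltaZAux, SF.tt]

lemma deltaZ_obs (Q : Set O) (i : I) : SF.deltaZ (SF.obs Q : SF I O) i = SF.tt := by
  simp [SF.deltaZ, SF.deltaZAux]

lemma deltaZ_conj (a b : SF I O) (i : I) :
    SF.deltaZ (SF.conj a b) i = SF.conj (SF.deltaZ a i) (SF.deltaZ b i) := by
  simp [SF.deltaZ, SF.deltaZAux]

lemma sat_tt (θ : X → Set O) (δ : X → I → X) (x : X) : Sat θ δ x SF.tt := by
  refine ⟨fun _ φ => φ = SF.tt, ?_, rfl⟩
  rintro y φ rfl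
  constructor
  · simp [SF.thetaZ, SF.tt]
  · intro j; simpa using deltaZ_tt (I := I) (O := O) j

lemma sat_obs (θ : X → Set O) (δ : X → I → X) (x : X) : Sat θ δ x (SF.obs (θ x)) := by
  refine ⟨fun z φ => φ = SF.obs (θ z) ∨ φ = SF.tt, ?_, Or.inl rfl⟩
  rintro y φ (rfl | rfl)
  · exact ⟨by simp [SF.thetaZ], fun j => Or.inr (deltaZ_obs _ j)⟩
  · exact ⟨by simp [SF.thetaZ, SF.tt], fun j => Or.inr (deltaZ_tt j)⟩

lemma sat_step (θ : X → Set O) (δ : X → I → X) (x : X) (ψ : SF I O)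
    (h : Sat θ δ x ψ) (i : I) : Sat θ δ (δ x i) (SF.deltaZ ψ i) := by
  obtain ⟨R, hR, hx⟩ := h
  exact ⟨R, hR, (hR x ψ hx).2 i⟩

lemma sat_conj (θ : X → Set O) (δ : X → I → X) (x : X) (a b : SF I O)
    (ha : Sat θ δ x a) (hb : Sat θ δ x b) : Sat θ δ x (SF.conj a b) := by
  obtain ⟨R1, hR1, hx1⟩ := ha
  obtain ⟨R2, hR2, hx2⟩ := hb
  refine ⟨fun z φ => R1 z φ ∨ R2 z φ ∨ ∃ a b, φ = SF.conj a b ∧ R1 z a ∧ R2 z b, ?_,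
    Or.inr (Or.inr ⟨a, b, rfl, hx1, hx2⟩)⟩
  rintro y φ (h | h | ⟨a, b, rfl, h1, h2⟩)
  · exact ⟨(hR1 y φ h).1, fun j => Or.inl ((hR1 y φ h).2 j)⟩
  · exact ⟨(hR2 y φ h).1, fun j => Or.inr (Or.inl ((hR2 y φ h).2 j))⟩
  · constructor
    · exact Set.subset_inter (hR1 y a h1).1 (hR2 y b h2).1
    · intro j
      rw [deltaZ_conj]
      exact Or.inr (Or.inr ⟨_, _, rfl, (hR1 y a h1).2 j, (hR2 y b h2).2 j⟩)

end Aux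

/-- The transition operator `→ᵢ(x, ψ) = (δ(x)(i), δ_ζ(ψ)(i) ∧ ⟨θ(δ(x)(i))⟩)` is an
algebraic operator: it is monotone with respect to satisfaction. -/
theorem transition_operator_algebraic {I O X : Type}
    (θ : X → Set O) (δ : X → I → X) (i : I)
    (x : X) (ψ : SF I O) (hclosed : ψ.Closed) (hguarded : ψ.Guarded)
    (h : Sat θ δ x ψ) :
    Sat θ δ (δ x i) (SF.conj (SF.deltaZ ψ i) (SF.obs (θ (δ x i)))) := by
  exact sat_conj θ δ _ _ _ (sat_step θ δ x ψ h i) (sat_obs θ δ (δ x i))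
end
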